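/- arXiv:1903.08123 — 2 statements merged into one kernel-verified Lean document; each statement's English description precedes it below -/
import Mathlib

section
/- Let G be a residually finite, finitely generated solvable group, let N be a nilpotent normal subgroup of G, let m > 1, and let x be a nontrivial element of γ_m(N). Let p be a prime and set α = (lcm{1, 2, …, p−1})^(m+2). If x^α ≠ 1, then D_G(x^α) ≥ p^(m+1); that is, every finite group H admitting a surjective homomorphism φ: G → H with φ(x^α) ≠ 1 satisfies |H| ≥ p^(m+1). -/
open Function

/-- The depth of an element: the minimal order of a finite quotient witnessing it. -/
noncomputable def depth {G : Type*} [Group G] (x : G) : ℕ∞ :=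
  sInf {d : ℕ∞ | ∃ (H : Type) (_ : Group H) (_ : Fintype H) (φ : G →* H),
    Surjective φ ∧ φ x ≠ 1 ∧ (Fintype.card H : ℕ∞) = d}

/-- Residual finiteness. -/
def ResiduallyFinite (G : Type*) [Group G] : Prop :=
  ∀ x : G, x ≠ 1 → ∃ (H : Type) (_ : Group H) (_ : Fintype H) (φ : G →* H),
    Surjective φ ∧ φ x ≠ 1

/-- `γ_m(N)` (with `γ_1(N) = N`) as a subgroup of the ambient group. -/
def gammaSub {G : Type*} [Group G] (N : Subgroup G) (m : ℕ) : Subgroup G :=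
  ((⊤ : Subgroup ↥N).lowerCentralSeries (m - 1)).map N.subtype

/-- `lcm {1, …, k}` -/
def lcmUpTo (k : ℕ) : ℕ := (Finset.Icc 1 k).lcm id

/-!
Push everything into a finite quotient `H`: the image `K` of `N` is a finite nilpotent group, hence
the product of its Sylow subgroups, so some Sylow `q`-subgroup `Q` receives an image `u` of `x`
with `u ∈ γ_m(Q)` and `u ^ α ≠ 1`. In the `q`-group `Q` the lower central series drops by a factor
`≥ q` at every step until it vanishes, and `[Q : Q'] ≥ q²` because a nilpotent group with cyclic
abelianization is abelian; hence `|Q| ≥ q ^ m · ord u`. Finally `ord u = q ^ c` does not divide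
`α = lcm{1, …, p-1} ^ (m+2)`, and comparing `q`-adic valuations gives `p ^ (m+1) ≤ q ^ (m+c)`.
-/

namespace Subgroup

variable {G : Type*} [Group G]

theorem top_lowerCentralSeries_eq_bot_of_le_succ [Group.IsNilpotent G] {n : ℕ}
    (h : (⊤ : Subgroup G).lowerCentralSeries n ≤ (⊤ : Subgroup G).lowerCentralSeries (n + 1)) :
    (⊤ : Subgroup G).lowerCentralSeries n = ⊥ := by
  have stable : ∀ k, (⊤ : Subgroup G).lowerCentralSeries n ≤
      (⊤ : Subgroup G).lowerCentralSeries (n + k) := by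
    intro k
    induction k with
    | zero => rfl
    | succ k ih => exact h.trans (commutator_mono ih le_rfl)
  obtain ⟨k, hk⟩ := nilpotent_iff_lowerCentralSeries.mp ‹_›
  rw [← le_bot_iff, ← hk]
  exact (stable k).trans (Subgroup.lowerCentralSeries_antitone _ (Nat.le_add_left k n))

theorem map_mem_top_lowerCentralSeries {K : Type*} [Group K] (f : G →* K) {n : ℕ} {x : G}
    (hx : x ∈ (⊤ : Subgroup G).lowerCentralSeries n) :
    f x ∈ (⊤ : Subgroup K).lowerCentralSeries n := by
  have hmap := mem_map_of_mem f hx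
  rw [map_lowerCentralSeries] at hmap
  exact lowerCentralSeries_mono n le_top hmap

end Subgroup

open scoped commutatorElement in
theorem Group.commutator_eq_bot_of_isCyclic_quotient {G : Type*} [Group G] [Group.IsNilpotent G]
    [IsCyclic (G ⧸ commutator G)] : commutator G = ⊥ := by
  -- `G ⧸ γ₃` is a central extension of the cyclic group `G ⧸ G'`, hence abelian, so `G' ≤ γ₃`.
  set N := (⊤ : Subgroup G).lowerCentralSeries 2
  have hN : N ≤ commutator G := Subgroup.lowerCentralSeries_antitone _ one_le_two
  let f := QuotientGroup.map N (commutator G) (MonoidHom.id G) hN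
  have hker : f.ker ≤ Subgroup.center (G ⧸ N) := by
    intro a ha
    obtain ⟨a, rfl⟩ := QuotientGroup.mk_surjective a
    refine Subgroup.mem_center_iff.mpr fun b => ?_
    obtain ⟨b, rfl⟩ := QuotientGroup.mk_surjective b
    have ha' : a ∈ commutator G := (QuotientGroup.eq_one_iff a).mp ha
    have hab : ⁅a, b⁆ ∈ N := Subgroup.commutator_mem_commutator ha' (Subgroup.mem_top b)
    exact (commutatorElement_eq_one_iff_mul_comm.mp ((QuotientGroup.eq_one_iff _).mpr hab)).symm
  let _ := commGroupOfCyclicCenterQuotient f hker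
  have hle : commutator G ≤ N := by
    simpa using Abelianization.commutator_subset_ker (QuotientGroup.mk' N)
  exact Subgroup.top_lowerCentralSeries_eq_bot_of_le_succ (n := 1) hle

theorem lcmUpTo_ne_zero (k : ℕ) : lcmUpTo k ≠ 0 := by
  simp [lcmUpTo, Finset.lcm_eq_zero_iff]

theorem lt_pow_succ_factorization_lcmUpTo {q : ℕ} (hq : q.Prime) (k : ℕ) :
    k < q ^ ((lcmUpTo k).factorization q + 1) := by
  by_contra! hle
  have hdvd : q ^ ((lcmUpTo k).factorization q + 1) ∣ lcmUpTo k :=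
    Finset.dvd_lcm (Finset.mem_Icc.mpr ⟨Nat.one_le_pow _ _ hq.pos, hle⟩)
  have := (hq.pow_dvd_iff_le_factorization (lcmUpTo_ne_zero k)).mp hdvd
  omega

theorem pow_succ_le_of_not_dvd_lcmUpTo_pow {p q c m : ℕ} (hq : q.Prime)
    (h : ¬ q ^ c ∣ lcmUpTo (p - 1) ^ (m + 2)) : p ^ (m + 1) ≤ q ^ m * q ^ c := by
  -- `q ^ (v + 1)` is the least power of `q` above `p - 1`; `q ^ c ∤ α` forces `c > (m + 2) v`.
  set v := (lcmUpTo (p - 1)).factorization q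
  have hc : (m + 2) * v < c := by
    by_contra! hle
    refine h ((pow_dvd_pow q hle).trans ?_)
    rw [pow_mul']
    exact pow_dvd_pow_of_dvd (Nat.ordProj_dvd _ q) _
  have hp : p ≤ q ^ (v + 1) := by
    have hlt : p - 1 < q ^ (v + 1) := lt_pow_succ_factorization_lcmUpTo hq (p - 1)
    omega
  calc p ^ (m + 1) ≤ (q ^ (v + 1)) ^ (m + 1) := Nat.pow_le_pow_left hp _
    _ = q ^ ((v + 1) * (m + 1)) := (pow_mul _ _ _).symm
    _ ≤ q ^ (m + c) := Nat.pow_le_pow_right hq.pos (by nlinarith)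
    _ = q ^ m * q ^ c := pow_add _ _ _

namespace IsPGroup

variable {P : Type*} [Group P] [Finite P] {q : ℕ} [hq : Fact q.Prime]

theorem mul_card_le_card_of_lt (hP : IsPGroup q P) {A B : Subgroup P} (h : A < B) :
    q * Nat.card A ≤ Nat.card B := by
  obtain ⟨k, hk⟩ := Subgroup.card_dvd_of_le h.le
  obtain ⟨b, hb⟩ := iff_card.mp (hP.to_subgroup B)
  obtain ⟨j, -, hj⟩ := (Nat.dvd_prime_pow hq.out).mp (Dvd.intro_left _ (hk.symm.trans hb))
  have hj0 : j ≠ 0 := by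
    rintro rfl
    rw [pow_zero] at hj
    subst hj
    exact h.not_ge (Subgroup.eq_of_le_of_card_ge h.le (by rw [hk, mul_one])).ge
  calc q * Nat.card A ≤ k * Nat.card A := by
        rw [hj]; exact Nat.mul_le_mul_right _ (Nat.le_self_pow hj0 q)
    _ = Nat.card B := by rw [hk, mul_comm]

theorem pow_mul_card_lowerCentralSeries_le (hP : IsPGroup q P) {i k : ℕ}
    (h : (⊤ : Subgroup P).lowerCentralSeries (i + k) ≠ ⊥) :
    q ^ k * Nat.card ((⊤ : Subgroup P).lowerCentralSeries (i + k)) ≤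
      Nat.card ((⊤ : Subgroup P).lowerCentralSeries i) := by
  have := hP.isNilpotent
  induction k with
  | zero => simp
  | succ k ih =>
    have hne : (⊤ : Subgroup P).lowerCentralSeries (i + k) ≠ ⊥ := fun hbot =>
      h (le_bot_iff.mp (hbot ▸ Subgroup.lowerCentralSeries_antitone _ (Nat.le_succ _)))
    have hlt : (⊤ : Subgroup P).lowerCentralSeries (i + k + 1) <
        (⊤ : Subgroup P).lowerCentralSeries (i + k) :=
      (Subgroup.lowerCentralSeries_antitone _ (Nat.le_succ _)).lt_of_not_ge
        fun hle => hne (Subgroup.top_lowerCentralSeries_eq_bot_of_le_succ hle)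
    calc q ^ (k + 1) * Nat.card ((⊤ : Subgroup P).lowerCentralSeries (i + (k + 1)))
        = q ^ k * (q * Nat.card ((⊤ : Subgroup P).lowerCentralSeries (i + k + 1))) := by ring_nf
      _ ≤ q ^ k * Nat.card ((⊤ : Subgroup P).lowerCentralSeries (i + k)) :=
        Nat.mul_le_mul_left _ (hP.mul_card_le_card_of_lt hlt)
      _ ≤ _ := ih hne

theorem sq_le_index_commutator (hP : IsPGroup q P) (h : commutator P ≠ ⊥) :
    q ^ 2 ≤ (commutator P).index := by
  obtain ⟨j, hj⟩ := hP.index (commutator P)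
  rw [hj]
  refine Nat.pow_le_pow_right hq.out.pos ?_
  by_contra! hj2
  have : IsCyclic (P ⧸ commutator P) := by
    refine isCyclic_of_card_dvd_prime (p := q) ?_
    rw [← Subgroup.index_eq_card, hj]
    interval_cases j <;> simp
  have := hP.isNilpotent
  exact h Group.commutator_eq_bot_of_isCyclic_quotient

theorem pow_mul_orderOf_le_card (hP : IsPGroup q P) {n : ℕ} {u : P}
    (hu : u ∈ (⊤ : Subgroup P).lowerCentralSeries (n + 1)) (hu1 : u ≠ 1) :
    q ^ (n + 2) * orderOf u ≤ Nat.card P := by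
  have hne : (⊤ : Subgroup P).lowerCentralSeries (1 + n) ≠ ⊥ := by
    rw [add_comm]
    intro hbot
    rw [hbot, Subgroup.mem_bot] at hu
    exact hu1 hu
  have hcomm : commutator P ≠ ⊥ := fun hbot =>
    hne (le_bot_iff.mp (hbot ▸ Subgroup.lowerCentralSeries_antitone _ (Nat.le_add_right 1 n)))
  calc q ^ (n + 2) * orderOf u
      ≤ q ^ 2 * (q ^ n * Nat.card ((⊤ : Subgroup P).lowerCentralSeries (1 + n))) := by
        rw [pow_add, mul_comm (q ^ n), mul_assoc, add_comm 1 n]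
        exact Nat.mul_le_mul_left _
          (Nat.mul_le_mul_left _ (Subgroup.orderOf_le_card _ (Set.toFinite _) hu))
    _ ≤ q ^ 2 * Nat.card (commutator P) :=
        Nat.mul_le_mul_left _ (hP.pow_mul_card_lowerCentralSeries_le hne)
    _ ≤ (commutator P).index * Nat.card (commutator P) :=
        Nat.mul_le_mul_right _ (hP.sq_le_index_commutator hcomm)
    _ = Nat.card P := Subgroup.index_mul_card _

theorem pow_le_card_of_pow_lcmUpTo_ne_one (hP : IsPGroup q P) {n p : ℕ} {u : P}
    (hu : u ∈ (⊤ : Subgroup P).lowerCentralSeries (n + 1))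
    (hα : u ^ lcmUpTo (p - 1) ^ (n + 4) ≠ 1) : p ^ (n + 3) ≤ Nat.card P := by
  obtain ⟨c, hc⟩ := iff_orderOf.mp hP u
  have hnd : ¬ q ^ c ∣ lcmUpTo (p - 1) ^ (n + 4) := by
    rwa [← hc, orderOf_dvd_iff_pow_eq_one]
  have hu1 : u ≠ 1 := by
    rintro rfl
    exact hα (one_pow _)
  calc p ^ (n + 3) ≤ q ^ (n + 2) * q ^ c := pow_succ_le_of_not_dvd_lcmUpTo_pow hq.out hnd
    _ = q ^ (n + 2) * orderOf u := by rw [hc]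
    _ ≤ Nat.card P := hP.pow_mul_orderOf_le_card hu hu1

end IsPGroup

theorem Group.exists_sylow_monoidHom_ne_one {K : Type*} [Group K] [Finite K] [Group.IsNilpotent K]
    {g : K} (hg : g ≠ 1) :
    ∃ (q : ℕ) (_ : Fact q.Prime) (Q : Sylow q K), ∃ η : K →* Q, η g ≠ 1 := by
  obtain ⟨e⟩ := (Group.isNilpotent_of_finite_tfae (G := K)).out 0 4 |>.mp ‹_›
  have hg' : e.symm g ≠ 1 := by simpa using hg
  obtain ⟨q, hq⟩ := Function.ne_iff.mp hg'
  obtain ⟨Q, hQ⟩ := Function.ne_iff.mp hq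
  have : Fact (q : ℕ).Prime := ⟨Nat.prime_of_mem_primeFactors q.2⟩
  exact ⟨q, this, Q,
    (Pi.evalMonoidHom _ Q).comp ((Pi.evalMonoidHom _ q).comp e.symm.toMonoidHom), hQ⟩

theorem Group.pow_le_card_of_pow_lcmUpTo_ne_one {K : Type*} [Group K] [Finite K]
    [Group.IsNilpotent K] {n p : ℕ} {y : K}
    (hy : y ∈ (⊤ : Subgroup K).lowerCentralSeries (n + 1))
    (hα : y ^ lcmUpTo (p - 1) ^ (n + 4) ≠ 1) : p ^ (n + 3) ≤ Nat.card K := by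
  obtain ⟨q, _, Q, η, hη⟩ := Group.exists_sylow_monoidHom_ne_one hα
  calc p ^ (n + 3) ≤ Nat.card Q :=
        Q.isPGroup'.pow_le_card_of_pow_lcmUpTo_ne_one
          (Subgroup.map_mem_top_lowerCentralSeries η hy) (by rwa [← map_pow])
    _ ≤ Nat.card K := Subgroup.card_le_card_group _

theorem depth_lower_bound_nilpotent_depth_general {G : Type*} [Group G]
    (N : Subgroup G) (hNnilp : Group.IsNilpotent N)
    (m : ℕ) (hm : 1 < m) (x : G) (hxγ : x ∈ gammaSub N m)
    (p : ℕ) :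
    ((p : ℕ∞) ^ (m + 1) ≤ depth (x ^ (lcmUpTo (p - 1) ^ (m + 2)))) ∧
    (∀ (H : Type) [Group H] [Fintype H] (φ : G →* H), Surjective φ →
      φ (x ^ (lcmUpTo (p - 1) ^ (m + 2))) ≠ 1 → p ^ (m + 1) ≤ Fintype.card H) := by
  obtain ⟨n, rfl⟩ : ∃ n, m = n + 2 := ⟨m - 2, by omega⟩
  obtain ⟨x, hx, rfl⟩ := Subgroup.mem_map.mp hxγ
  have bound : ∀ (H : Type) [Group H] [Fintype H] (φ : G →* H),
      φ (x ^ lcmUpTo (p - 1) ^ (n + 4)) ≠ 1 → p ^ (n + 3) ≤ Fintype.card H := by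
    intro H _ _ φ hφ
    have : Group.IsNilpotent (N.map φ) :=
      Group.nilpotent_of_surjective _ (φ.subgroupMap_surjective N)
    calc p ^ (n + 3) ≤ Nat.card (N.map φ) :=
          Group.pow_le_card_of_pow_lcmUpTo_ne_one
            (Subgroup.map_mem_top_lowerCentralSeries (φ.subgroupMap N) hx)
            (by simpa [← map_pow, Subtype.ext_iff] using hφ)
      _ ≤ Nat.card H := Subgroup.card_le_card_group _
      _ = Fintype.card H := Nat.card_eq_fintype_card
  refine ⟨le_sInf ?_, fun H _ _ φ _ => bound H φ⟩
  rintro _ ⟨H, _, _, φ, -, hφ, rfl⟩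
  exact_mod_cast bound H φ hφ

/-- for a residually finite, finitely generated solvable `G`, a nilpotent normal
`N ⊴ G`, `m > 1`, a nontrivial `x ∈ γ_m(N)`, a prime `p`, and
`α = (lcm {1, …, p-1})^(m+2)`: if `x^α ≠ 1` then `D_G(x^α) ≥ p^(m+1)`, i.e. every finite group
`H` with a surjection `φ : G → H` such that `φ(x^α) ≠ 1` has `|H| ≥ p^(m+1)`. -/
theorem depth_lower_bound_nilpotent_depth {G : Type*} [Group G]
    (hRF : ResiduallyFinite G) (hFG : Group.FG G) (hsolv : IsSolvable G)
    (N : Subgroup G) (hN : N.Normal) (hNnilp : Group.IsNilpotent N)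
    (m : ℕ) (hm : 1 < m) (x : G) (hx : x ≠ 1) (hxγ : x ∈ gammaSub N m)
    (p : ℕ) (hp : p.Prime)
    (hxα : x ^ (lcmUpTo (p - 1) ^ (m + 2)) ≠ 1) :
    ((p : ℕ∞) ^ (m + 1) ≤ depth (x ^ (lcmUpTo (p - 1) ^ (m + 2)))) ∧
    (∀ (H : Type) [Group H] [Fintype H] (φ : G →* H), Surjective φ →
      φ (x ^ (lcmUpTo (p - 1) ^ (m + 2))) ≠ 1 → p ^ (m + 1) ≤ Fintype.card H) :=
  depth_lower_bound_nilpotent_depth_general N hNnilp m hm x hxγ p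
end

section
/- In the Baumslag–Solitar group BS(1,m) = ⟨a, t | t a t⁻¹ = aᵐ⟩ with m ≥ 2, equipped with the generating set S = {a, t}, the element a has infinite order and the cyclic subgroup ⟨a⟩ is strictly exponentially distorted: there is a constant C > 0 such that for all integers n ≥ 2, (1/C)·log n ≤ ‖aⁿ‖_S ≤ C·log n. -/
open Function

/-- Word length with respect to a finite generating set `S`. -/
noncomputable def wordLength {G : Type*} [Group G] (S : Finset G) (x : G) : ℕ :=
  sInf {n | ∃ l : List G, (∀ g ∈ l, g ∈ S ∨ g⁻¹ ∈ S) ∧ l.length = n ∧ l.prod = x}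

/-- The defining relation `t a t⁻¹ a⁻ᵐ` of `BS(1,m)`, with `false ↦ a` and `true ↦ t`. -/
def BSRel (m : ℕ) : Set (FreeGroup Bool) :=
  {FreeGroup.of true * FreeGroup.of false * (FreeGroup.of true)⁻¹ *
    (FreeGroup.of false) ^ (-(m : ℤ))}

/-- The Baumslag–Solitar group `BS(1,m) = ⟨a, t ∣ t a t⁻¹ = aᵐ⟩`. -/
def BS (m : ℕ) : Type := PresentedGroup (BSRel m)

instance (m : ℕ) : Group (BS m) := by unfold BS; infer_instance

/-- The generator `a` of `BS(1,m)`. -/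
def BSa (m : ℕ) : BS m := PresentedGroup.of false

/-- The generator `t` of `BS(1,m)`. -/
def BSt (m : ℕ) : BS m := PresentedGroup.of true

/-- The generating set `S = {a, t}` of `BS(1,m)`. -/
noncomputable def BSGenSet (m : ℕ) : Finset (BS m) :=
  letI := Classical.decEq (BS m)
  {BSa m, BSt m}

/-! For `n = q m + r` with `r < m` we have `aⁿ = aʳ · t a^q t⁻¹`, so each base-`m` digit of `n`
costs at most `m + 1` letters. Conversely, `BS(1,m)` acts on `ℝ` by `a : x ↦ x + 1` and
`t : x ↦ m x`; no letter increases `|x| + 1` by more than a factor `m`, while `aⁿ` moves `0` to `n`,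
so `n + 1 ≤ m ^ ‖aⁿ‖`. -/

section WordLength

variable {G : Type*} [Group G] {S : Finset G}

theorem wordLength_le_length {l : List G} (hl : ∀ g ∈ l, g ∈ S ∨ g⁻¹ ∈ S) :
    wordLength S l.prod ≤ l.length :=
  Nat.sInf_le ⟨l, hl, rfl, rfl⟩

theorem wordLength_le_one {g : G} (hg : g ∈ S ∨ g⁻¹ ∈ S) : wordLength S g ≤ 1 := by
  simpa using wordLength_le_length (S := S) (l := [g]) (by simpa using hg)

theorem wordLength_pow_le {g : G} (hg : g ∈ S ∨ g⁻¹ ∈ S) (k : ℕ) : wordLength S (g ^ k) ≤ k := by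
  simpa using wordLength_le_length (S := S) (l := List.replicate k g)
    (fun h hh => List.eq_of_mem_replicate hh ▸ hg)

theorem exists_list_length_eq_wordLength (hS : Subgroup.closure (S : Set G) = ⊤) (x : G) :
    ∃ l : List G, (∀ g ∈ l, g ∈ S ∨ g⁻¹ ∈ S) ∧ l.length = wordLength S x ∧ l.prod = x := by
  have hx : x ∈ Submonoid.closure ((S : Set G) ∪ (S : Set G)⁻¹) := by
    rw [← Subgroup.closure_toSubmonoid, hS]
    trivial
  obtain ⟨l, hl, rfl⟩ := Submonoid.exists_list_of_mem_closure hx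
  exact Nat.sInf_mem (s := {n | ∃ l' : List G, (∀ g ∈ l', g ∈ S ∨ g⁻¹ ∈ S) ∧ l'.length = n ∧
    l'.prod = l.prod}) ⟨l.length, l, by simpa using hl, rfl, rfl⟩

theorem wordLength_mul_le (hS : Subgroup.closure (S : Set G) = ⊤) (x y : G) :
    wordLength S (x * y) ≤ wordLength S x + wordLength S y := by
  obtain ⟨l₁, hl₁, hlen₁, rfl⟩ := exists_list_length_eq_wordLength hS x
  obtain ⟨l₂, hl₂, hlen₂, rfl⟩ := exists_list_length_eq_wordLength hS y
  rw [← hlen₁, ← hlen₂, ← List.length_append, ← List.prod_append]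
  exact wordLength_le_length (by simpa [or_imp, forall_and] using ⟨hl₁, hl₂⟩)

theorem le_pow_wordLength_mul {X : Type*} (φ : G →* Equiv.Perm X)
    (hS : Subgroup.closure (S : Set G) = ⊤) (ρ : X → ℝ) {K : ℝ} (hK : 0 ≤ K)
    (hρ : ∀ s, s ∈ S ∨ s⁻¹ ∈ S → ∀ x, ρ (φ s x) ≤ K * ρ x) (g : G) (x : X) :
    ρ (φ g x) ≤ K ^ wordLength S g * ρ x := by
  obtain ⟨l, hl, hlen, rfl⟩ := exists_list_length_eq_wordLength hS g
  rw [← hlen]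
  clear hlen
  induction l with
  | nil => simp
  | cons s l ih =>
    rw [List.prod_cons, map_mul, Equiv.Perm.mul_apply, List.length_cons, pow_succ', mul_assoc]
    exact (hρ s (hl s List.mem_cons_self) _).trans <|
      mul_le_mul_of_nonneg_left (ih fun g hg => hl g (List.mem_cons_of_mem s hg)) hK

end WordLength

theorem natLog_add_one_le_four_mul_log {b n : ℕ} (hb : 2 ≤ b) (hn : 2 ≤ n) :
    (Nat.log b n + 1 : ℝ) ≤ 4 * Real.log n := by
  have hlog2 : 1 / 2 < Real.log 2 := by linarith [Real.log_two_gt_d9]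
  have hlog2n : Real.log 2 ≤ Real.log n := Real.log_le_log (by norm_num) (by exact_mod_cast hn)
  have hlogb : (Nat.log b n : ℝ) ≤ Real.log n / Real.log 2 :=
    calc (Nat.log b n : ℝ) ≤ Nat.log 2 n := by exact_mod_cast Nat.log_anti_left one_lt_two hb
      _ ≤ Real.logb 2 n := by exact_mod_cast Real.natLog_le_logb n 2
      _ = Real.log n / Real.log 2 := rfl
  have : Real.log n / Real.log 2 ≤ 2 * Real.log n := by
    rw [div_le_iff₀ (by linarith)]
    nlinarith
  linarith

namespace BS

variable {m : ℕ}

theorem mem_genSet_iff {x : BS m} : x ∈ BSGenSet m ↔ x = BSa m ∨ x = BSt m := by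
  classical
  simp [BSGenSet]

theorem a_mem_genSet (m : ℕ) : BSa m ∈ BSGenSet m := mem_genSet_iff.2 (Or.inl rfl)

theorem t_mem_genSet (m : ℕ) : BSt m ∈ BSGenSet m := mem_genSet_iff.2 (Or.inr rfl)

theorem closure_genSet (m : ℕ) : Subgroup.closure (BSGenSet m : Set (BS m)) = ⊤ := by
  refine eq_top_iff.2 <| (PresentedGroup.closure_range_of (BSRel m)).ge.trans <|
    Subgroup.closure_mono ?_
  rintro _ ⟨_ | _, rfl⟩
  exacts [a_mem_genSet m, t_mem_genSet m]

theorem t_mul_a_mul_t_inv (m : ℕ) : BSt m * BSa m * (BSt m)⁻¹ = BSa m ^ m := by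
  have h := PresentedGroup.one_of_mem (Set.mem_singleton _ : _ ∈ BSRel m)
  simp only [map_mul, map_inv, zpow_neg, zpow_natCast, mul_inv_eq_one] at h
  exact h

noncomputable def toPerm (hm : m ≠ 0) : BS m →* Equiv.Perm ℝ :=
  PresentedGroup.toGroup (f := fun b =>
    bif b then Equiv.mulRight₀ (m : ℝ) (Nat.cast_ne_zero.2 hm) else Equiv.addRight 1) <| by
    rintro _ rfl
    ext x
    simp [Equiv.Perm.mul_apply, add_mul, hm]

theorem toPerm_a (hm : m ≠ 0) : toPerm hm (BSa m) = Equiv.addRight 1 :=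
  PresentedGroup.toGroup.of _

theorem toPerm_t (hm : m ≠ 0) :
    toPerm hm (BSt m) = Equiv.mulRight₀ (m : ℝ) (Nat.cast_ne_zero.2 hm) :=
  PresentedGroup.toGroup.of _

theorem toPerm_a_pow_apply (hm : m ≠ 0) (n : ℕ) (x : ℝ) : toPerm hm (BSa m ^ n) x = x + n := by
  simp [toPerm_a]

theorem not_isOfFinOrder_a (hm : m ≠ 0) : ¬ IsOfFinOrder (BSa m) := by
  rw [isOfFinOrder_iff_pow_eq_one]
  rintro ⟨n, hn, h⟩
  have := toPerm_a_pow_apply hm n 0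
  rw [h, map_one] at this
  simp only [Equiv.Perm.one_apply, zero_add] at this
  exact hn.ne (by exact_mod_cast this)

theorem abs_toPerm_add_one_le (hm : 2 ≤ m) {s : BS m} (hs : s ∈ BSGenSet m ∨ s⁻¹ ∈ BSGenSet m)
    (x : ℝ) : |toPerm (by omega) s x| + 1 ≤ m * (|x| + 1) := by
  have hm' : (2 : ℝ) ≤ m := by exact_mod_cast hm
  simp only [mem_genSet_iff, inv_eq_iff_eq_inv] at hs
  rcases hs with (rfl | rfl) | (rfl | rfl)
  · simp only [toPerm_a, Equiv.coe_addRight]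
    nlinarith [abs_add_le x 1, abs_one (α := ℝ), abs_nonneg x]
  · simp only [toPerm_t, Equiv.mulRight₀_apply, abs_mul, Nat.abs_cast]
    nlinarith [abs_nonneg x]
  · simp only [map_inv, toPerm_a, Equiv.Perm.inv_def, Equiv.addRight_symm, Equiv.coe_addRight]
    nlinarith [abs_add_le x (-1), abs_neg (1 : ℝ), abs_one (α := ℝ), abs_nonneg x]
  · simp only [map_inv, toPerm_t, Equiv.Perm.coe_inv, Equiv.mulRight₀_symm_apply, abs_mul,
      abs_inv, Nat.abs_cast]
    have hinv : (m : ℝ)⁻¹ ≤ 1 := inv_le_one_of_one_le₀ (by linarith)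
    nlinarith [abs_nonneg x, mul_le_mul_of_nonneg_left hinv (abs_nonneg x)]

theorem natCast_add_one_le_pow_wordLength (hm : 2 ≤ m) (n : ℕ) :
    (n : ℝ) + 1 ≤ (m : ℝ) ^ wordLength (BSGenSet m) (BSa m ^ n) := by
  have := le_pow_wordLength_mul (toPerm (by omega)) (closure_genSet m) (fun x => |x| + 1)
    (Nat.cast_nonneg m) (fun s hs => abs_toPerm_add_one_le hm hs) (BSa m ^ n) 0
  simpa only [toPerm_a_pow_apply, zero_add, Nat.abs_cast, abs_zero, mul_one] using this

theorem wordLength_a_pow_le (hm : 2 ≤ m) (n : ℕ) :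
    wordLength (BSGenSet m) (BSa m ^ n) ≤ (m + 1) * (Nat.log m n + 1) := by
  induction n using Nat.strong_induction_on with
  | _ n ih =>
  rcases lt_or_ge n m with hnm | hnm
  · calc wordLength (BSGenSet m) (BSa m ^ n) ≤ n := wordLength_pow_le (Or.inl (a_mem_genSet m)) n
      _ ≤ (m + 1) * (Nat.log m n + 1) := by nlinarith
  have hdecomp : BSa m ^ n = BSa m ^ (n % m) * (BSt m * BSa m ^ (n / m) * (BSt m)⁻¹) := by
    rw [← conj_pow, t_mul_a_mul_t_inv, ← pow_mul, ← pow_add, Nat.mod_add_div]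
  have hlog : Nat.log m n = Nat.log m (n / m) + 1 := by
    rw [Nat.log_div_base, Nat.sub_add_cancel (Nat.log_pos (by omega) hnm)]
  have hS := closure_genSet m
  have ht : wordLength (BSGenSet m) (BSt m) ≤ 1 := wordLength_le_one (Or.inl (t_mem_genSet m))
  have ht' : wordLength (BSGenSet m) (BSt m)⁻¹ ≤ 1 :=
    wordLength_le_one (Or.inr (by simpa using t_mem_genSet m))
  calc wordLength (BSGenSet m) (BSa m ^ n)
      ≤ wordLength (BSGenSet m) (BSa m ^ (n % m)) + (wordLength (BSGenSet m) (BSt m) +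
          wordLength (BSGenSet m) (BSa m ^ (n / m)) + wordLength (BSGenSet m) (BSt m)⁻¹) := by
        rw [hdecomp]
        grw [wordLength_mul_le hS, wordLength_mul_le hS, wordLength_mul_le hS]
    _ ≤ n % m + (1 + (m + 1) * (Nat.log m (n / m) + 1) + 1) := by
        gcongr
        · exact wordLength_pow_le (Or.inl (a_mem_genSet m)) _
        · exact ih _ (Nat.div_lt_self (by omega) (by omega))
    _ ≤ (m + 1) * (Nat.log m n + 1) := by
        rw [hlog]
        nlinarith [Nat.mod_lt n (by omega : 0 < m)]

end BS

/-- in `BS(1,m)` with `m ≥ 2` and `S = {a, t}`, the element `a` has infinite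
order and `⟨a⟩` is strictly exponentially distorted:
`(1/C) log n ≤ ‖aⁿ‖_S ≤ C log n` for all integers `n ≥ 2`. -/
theorem BS_exponential_distortion (m : ℕ) (hm : 2 ≤ m) :
    ¬ IsOfFinOrder (BSa m) ∧
    ∃ C : ℝ, 0 < C ∧ ∀ n : ℤ, 2 ≤ n →
      (1 / C) * Real.log n ≤ (wordLength (BSGenSet m) ((BSa m) ^ n) : ℝ) ∧
        (wordLength (BSGenSet m) ((BSa m) ^ n) : ℝ) ≤ C * Real.log n := by
  refine ⟨BS.not_isOfFinOrder_a (by omega), 4 * (m + 1), by positivity, fun n hn => ?_⟩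
  lift n to ℕ using (by omega)
  rw [zpow_natCast, Int.cast_natCast]
  have hn2 : 2 ≤ n := by exact_mod_cast hn
  set W := wordLength (BSGenSet m) (BSa m ^ n)
  have hlog_m : Real.log m ≤ 4 * (m + 1) := by
    linarith [Real.log_le_sub_one_of_pos (by positivity : (0 : ℝ) < m)]
  have hlog_n : Real.log n ≤ W * Real.log m :=
    calc Real.log n ≤ Real.log ((m : ℝ) ^ W) :=
          Real.log_le_log (by positivity)
            (by linarith [BS.natCast_add_one_le_pow_wordLength hm n])
      _ = W * Real.log m := Real.log_pow _ _
  constructor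
  · rw [one_div, inv_mul_le_iff₀ (by positivity)]
    nlinarith [Real.log_pos (by exact_mod_cast hm : (1 : ℝ) < m)]
  · calc (W : ℝ) ≤ (m + 1) * (Nat.log m n + 1) := by exact_mod_cast BS.wordLength_a_pow_le hm n
      _ ≤ (m + 1) * (4 * Real.log n) := by gcongr; exact natLog_add_one_le_four_mul_log hm hn2
      _ = 4 * (m + 1) * Real.log n := by ring
end
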